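/- Let p, q be positive constants with p·q < 1/4. Then there exists a nonzero measurable function f : ℝ → ℂ and a constant C > 0 such that |f(x)| ≤ C e^{-p x^2} for all x ∈ ℝ, |𝓕f(ξ)| ≤ C e^{-q ξ^2} for all ξ ∈ ℝ, and f is not almost everywhere equal to any constant multiple of e^{-p x^2}. -/

import Mathlib

open MeasureTheory

/-- The Fourier transform on `ℝ` with the normalization
`𝓕f(ξ) = (2π)^{-1/2} ∫ f(x) e^{-ixξ} dx`. -/
noncomputable def fourierTransformLine (f : ℝ → ℂ) (ξ : ℝ) : ℂ :=
  ((2 * Real.pi) ^ (-(1 : ℝ) / 2) : ℝ) *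
    ∫ x : ℝ, Complex.exp (-Complex.I * (x : ℂ) * (ξ : ℂ)) * f x

/-!
Any Gaussian `e^{-a x²}` with `p < a < 1/(4q)` works. It decays faster than `e^{-p x²}`, its
Fourier transform is `(2a)^{-1/2} e^{-ξ²/(4a)}`, which decays faster than `e^{-q ξ²}` because
`4aq < 1`, and two continuous functions that agree almost everywhere agree everywhere, so
comparing the values at `0` and `1` shows that it is not a multiple of `e^{-p x²}` as `a ≠ p`.
-/

open Real
open scoped Complex

lemma fourierTransformLine_gaussian {b : ℂ} (hb : 0 < b.re) (ξ : ℝ) :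
    fourierTransformLine (fun x ↦ cexp (-b * x ^ 2)) ξ =
      ((2 * π) ^ (-(1 : ℝ) / 2) : ℝ) * ((π / b) ^ (1 / 2 : ℂ) * cexp (-ξ ^ 2 / (4 * b))) := by
  rw [fourierTransformLine, ← neg_sq, ← fourierIntegral_gaussian hb]
  congr 2 with x
  ring_nf

lemma norm_fourierTransformLine_gaussian {b : ℝ} (hb : 0 < b) (ξ : ℝ) :
    ‖fourierTransformLine (fun x ↦ cexp (-b * x ^ 2)) ξ‖ =
      (2 * b) ^ (-(1 : ℝ) / 2) * rexp (-ξ ^ 2 / (4 * b)) := by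
  have hre : 0 < (b : ℂ).re := by simpa using hb
  rw [fourierTransformLine_gaussian hre, norm_mul, norm_mul, Complex.norm_real,
    ← Complex.ofReal_div, Complex.norm_cpow_eq_rpow_re_of_pos (by positivity),
    show -(ξ : ℂ) ^ 2 / (4 * b) = ((-ξ ^ 2 / (4 * b) : ℝ) : ℂ) by push_cast; ring,
    Complex.norm_exp_ofReal, ← mul_assoc, Real.norm_of_nonneg (by positivity)]
  congr 1
  rw [show (1 / 2 : ℂ).re = 1 / 2 by norm_num, neg_div, rpow_neg (by positivity),
    rpow_neg (by positivity), mul_rpow (by positivity) hb.le, mul_rpow (by positivity) pi_pos.le,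
    div_rpow pi_pos.le hb.le]
  field_simp

lemma not_ae_eq_const_mul_gaussian {a p : ℝ} (hap : a ≠ p) (A : ℂ) :
    ¬ ∀ᵐ x : ℝ, cexp (-(a : ℂ) * x ^ 2) = A * cexp (-(p : ℂ) * x ^ 2) := by
  intro h
  have heq := (Continuous.ae_eq_iff_eq volume (by fun_prop) (by fun_prop)).mp h
  have hA : A = 1 := by simpa using (congrFun heq 0).symm
  have h1 := congrArg norm (congrFun heq 1)
  rw [hA, one_mul, norm_cexp_neg_mul_sq, norm_cexp_neg_mul_sq] at h1
  exact hap (by simpa using h1)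

theorem stmt_7 (p q : ℝ) (hp : 0 < p) (hq : 0 < q) (hpq : p * q < 1 / 4) :
    ∃ (f : ℝ → ℂ) (C : ℝ), Measurable f ∧ f ≠ 0 ∧ 0 < C ∧
      (∀ x : ℝ, ‖f x‖ ≤ C * Real.exp (-p * x ^ 2)) ∧
      (∀ ξ : ℝ, ‖fourierTransformLine f ξ‖ ≤ C * Real.exp (-q * ξ ^ 2)) ∧
      ∀ A : ℂ, ¬ (∀ᵐ x : ℝ, f x = A * Complex.exp (-(p : ℂ) * (x : ℂ) ^ 2)) := by
  obtain ⟨a, hpa, haq⟩ : ∃ a, p < a ∧ a < 1 / (4 * q) :=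
    exists_between (by rw [lt_div_iff₀ (by positivity)]; linarith)
  have ha : 0 < a := hp.trans hpa
  rw [lt_div_iff₀ (by positivity)] at haq
  set C := max 1 ((2 * a) ^ (-(1 : ℝ) / 2))
  refine ⟨fun x ↦ cexp (-(a : ℂ) * x ^ 2), C, by fun_prop, fun h ↦ by simpa using congrFun h 0,
    by positivity, fun x ↦ ?_, fun ξ ↦ ?_, not_ae_eq_const_mul_gaussian hpa.ne'⟩
  · rw [norm_cexp_neg_mul_sq, Complex.ofReal_re]
    calc rexp (-a * x ^ 2) ≤ rexp (-p * x ^ 2) := by gcongr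
      _ ≤ C * rexp (-p * x ^ 2) := le_mul_of_one_le_left (by positivity) (le_max_left _ _)
  · rw [norm_fourierTransformLine_gaussian ha]
    gcongr
    · exact le_max_right _ _
    · rw [div_le_iff₀ (by positivity)]
      nlinarith [sq_nonneg ξ]
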